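/- Let G be a weighted directed graph on vertex set V = {1,…,n} and let M_9 be the simple 2-path motif with vertices {1,2,3} and edge set E_M = {(1,2),(2,3)}. Then the functional motif adjacency matrix of M_9 in G satisfies M^func = (1/2)·(C + Cᵀ), where C = J ∘ (J_n Gᵀ) + G ∘ (J_n Jᵀ) + J_n ∘ (J G) + J_n ∘ (G J) + J ∘ (Gᵀ J_n) + G ∘ (Jᵀ J_n). -/

import Mathlib

/-!
A functional instance of the 2-path motif is the image of an embedding of `0 → 1 → 2`, i.e. a
directed path `a → b → c` through three distinct vertices, and different paths give different
instances since the motif has no nontrivial automorphism. With every vertex anchored, `{i, j}` is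
an anchored pair exactly when `i ≠ j` both lie on the path. So `2 M^func_ij` is the sum of
`G_ab + G_bc` over such paths, which splits according to the six positions of `(i, j)` among
`(a, b, c)`: the three with `i` before `j` give `C_ij`, the other three `C_ji`, and each is a single
sum over the remaining vertex, i.e. an entry of a matrix product. Because `G ≥ 0` has zero
diagonal, `G = J ∘ G`, which turns the weight of a path into those products.
-/

open scoped Classical BigOperators Matrix

noncomputable section

/-- A motif on `m` vertices: a weakly connected loopless directed graph on the vertex set
`Fin m`, given by its edge set. -/
structure Motif (m : ℕ) where
  edges : Finset (Fin m × Fin m)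
  irrefl : ∀ e ∈ edges, e.1 ≠ e.2
  connected : (SimpleGraph.fromRel (fun u v => (u, v) ∈ edges)).Connected

variable {n m : ℕ}

/-- Edge set of the weighted directed graph with weight matrix `G`:
`E = {(i,j) : i ≠ j and G i j > 0}`. -/
def edgeFinset (G : Matrix (Fin n) (Fin n) ℝ) : Finset (Fin n × Fin n) :=
  Finset.univ.filter fun p => p.1 ≠ p.2 ∧ 0 < G p.1 p.2

/-- Directed-edge indicator matrix `J`. -/
def Jmat (G : Matrix (Fin n) (Fin n) ℝ) : Matrix (Fin n) (Fin n) ℝ :=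
  fun i j => if (i, j) ∈ edgeFinset G then 1 else 0

/-- Single-edge indicator matrix `J_s`. -/
def Jsmat (G : Matrix (Fin n) (Fin n) ℝ) : Matrix (Fin n) (Fin n) ℝ :=
  fun i j => if (i, j) ∈ edgeFinset G ∧ (j, i) ∉ edgeFinset G then 1 else 0

/-- Double-edge indicator matrix `J_d`. -/
def Jdmat (G : Matrix (Fin n) (Fin n) ℝ) : Matrix (Fin n) (Fin n) ℝ :=
  fun i j => if (i, j) ∈ edgeFinset G ∧ (j, i) ∈ edgeFinset G then 1 else 0

/-- Missing-edge indicator matrix `J_0`. -/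
def J0mat (G : Matrix (Fin n) (Fin n) ℝ) : Matrix (Fin n) (Fin n) ℝ :=
  fun i j => if (i, j) ∉ edgeFinset G ∧ (j, i) ∉ edgeFinset G ∧ i ≠ j then 1 else 0

/-- Vertex-distinct indicator matrix `J_n`. -/
def Jnmat (n : ℕ) : Matrix (Fin n) (Fin n) ℝ :=
  fun i j => if i ≠ j then 1 else 0

/-- Single-edge weighted matrix `G_s`. -/
def Gsmat (G : Matrix (Fin n) (Fin n) ℝ) : Matrix (Fin n) (Fin n) ℝ :=
  fun i j => if (i, j) ∈ edgeFinset G ∧ (j, i) ∉ edgeFinset G then G i j else 0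

/-- Double-edge weighted matrix `G_d`. -/
def Gdmat (G : Matrix (Fin n) (Fin n) ℝ) : Matrix (Fin n) (Fin n) ℝ :=
  fun i j => if (i, j) ∈ edgeFinset G ∧ (j, i) ∈ edgeFinset G then G i j + G j i else 0

/-- Entrywise (Hadamard) product of matrices. -/
def had (A B : Matrix (Fin n) (Fin n) ℝ) : Matrix (Fin n) (Fin n) ℝ :=
  fun i j => A i j * B i j

/-- Well-formedness of a candidate subgraph `H = (V_H, E_H)` of a graph on `Fin n`:
each edge joins two distinct vertices of `H`. -/
def IsGraphPair (H : Finset (Fin n) × Finset (Fin n × Fin n)) : Prop :=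
  ∀ e ∈ H.2, e.1 ∈ H.1 ∧ e.2 ∈ H.1 ∧ e.1 ≠ e.2

/-- `φ` is an isomorphism from the motif `M` onto the graph `H = (V_H, E_H)`. -/
def IsIso (M : Motif m) (H : Finset (Fin n) × Finset (Fin n × Fin n))
    (φ : Fin m → Fin n) : Prop :=
  Function.Injective φ ∧ Finset.image φ Finset.univ = H.1 ∧
    ∀ u v : Fin m, (u, v) ∈ M.edges ↔ (φ u, φ v) ∈ H.2

/-- `H` is a functional instance of motif `M` in the graph with weight matrix `G`,
i.e. `M ≅ H ≤ G`. -/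
def IsFuncInstance (M : Motif m) (G : Matrix (Fin n) (Fin n) ℝ)
    (H : Finset (Fin n) × Finset (Fin n × Fin n)) : Prop :=
  IsGraphPair H ∧ H.2 ⊆ edgeFinset G ∧ ∃ φ, IsIso M H φ

/-- `H` is a structural instance of motif `M` in the graph with weight matrix `G`,
i.e. `M ≅ H < G` (`H` an induced subgraph: `E_H = E ∩ (V_H × V_H)`). -/
def IsStrucInstance (M : Motif m) (G : Matrix (Fin n) (Fin n) ℝ)
    (H : Finset (Fin n) × Finset (Fin n × Fin n)) : Prop :=
  IsGraphPair H ∧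
    H.2 = (edgeFinset G).filter (fun e => e.1 ∈ H.1 ∧ e.2 ∈ H.1) ∧
    ∃ φ, IsIso M H φ

/-- `{i, j}` is an anchored pair of the instance `H`: there is an isomorphism `φ` from
`M` to `H` and distinct anchors `a, b ∈ A` with `φ a = i` and `φ b = j`. -/
def AnchoredPair (M : Motif m) (A : Finset (Fin m))
    (H : Finset (Fin n) × Finset (Fin n × Fin n)) (i j : Fin n) : Prop :=
  ∃ φ, IsIso M H φ ∧ ∃ a ∈ A, ∃ b ∈ A, a ≠ b ∧ φ a = i ∧ φ b = j

/-- The functional motif adjacency matrix of the motif `(M, A)` in the graph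
with weight matrix `G`. -/
def mamFunc (M : Motif m) (A : Finset (Fin m)) (G : Matrix (Fin n) (Fin n) ℝ) :
    Matrix (Fin n) (Fin n) ℝ :=
  fun i j => (1 / (M.edges.card : ℝ)) *
    ∑ H : Finset (Fin n) × Finset (Fin n × Fin n),
      if IsFuncInstance M G H ∧ AnchoredPair M A H i j then ∑ e ∈ H.2, G e.1 e.2 else 0

/-- The structural motif adjacency matrix of the motif `(M, A)` in the graph
with weight matrix `G`. -/
def mamStruc (M : Motif m) (A : Finset (Fin m)) (G : Matrix (Fin n) (Fin n) ℝ) :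
    Matrix (Fin n) (Fin n) ℝ :=
  fun i j => (1 / (M.edges.card : ℝ)) *
    ∑ H : Finset (Fin n) × Finset (Fin n × Fin n),
      if IsStrucInstance M G H ∧ AnchoredPair M A H i j then ∑ e ∈ H.2, G e.1 e.2 else 0


theorem Fintype.sum_ite_eq_sum_ite_of_injOn {ι κ R : Type*} [Fintype ι] [Fintype κ]
    [AddCommMonoid R] {P : κ → Prop} {Q : ι → Prop} [DecidablePred P] [DecidablePred Q]
    {g : κ → R} {h : ι → R} (f : ι → κ) (hf : Set.InjOn f {t | Q t})
    (hP : ∀ x, P x ↔ ∃ t, Q t ∧ x = f t) (hg : ∀ t, Q t → g (f t) = h t) :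
    ∑ x, (if P x then g x else 0) = ∑ t, if Q t then h t else 0 := by
  have himage : Finset.univ.filter P = (Finset.univ.filter Q).image f := by
    ext x
    simp [hP, eq_comm]
  rw [← Finset.sum_filter, ← Finset.sum_filter, himage, Finset.sum_image (by simpa using hf)]
  exact Finset.sum_congr rfl fun t ht => hg t (Finset.mem_filter.mp ht).2

theorem mem_edgeFinset {G : Matrix (Fin n) (Fin n) ℝ} {x y : Fin n} :
    (x, y) ∈ edgeFinset G ↔ x ≠ y ∧ 0 < G x y := by
  simp [edgeFinset]

theorem apply_eq_zero_of_notMem_edgeFinset {G : Matrix (Fin n) (Fin n) ℝ}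
    (hpos : ∀ i j, 0 ≤ G i j) (hdiag : ∀ i, G i i = 0) {x y : Fin n}
    (h : (x, y) ∉ edgeFinset G) : G x y = 0 := by
  rcases eq_or_ne x y with rfl | hxy
  · exact hdiag x
  · simp only [mem_edgeFinset, hxy, ne_eq, not_false_eq_true, true_and, not_lt] at h
    exact le_antisymm h (hpos x y)

namespace Motif

def image (M : Motif m) (φ : Fin m → Fin n) : Finset (Fin n) × Finset (Fin n × Fin n) :=
  (Finset.univ.image φ, M.edges.image (Prod.map φ φ))

theorem isIso_image (M : Motif m) {φ : Fin m → Fin n} (hφ : Function.Injective φ) :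
    IsIso M (M.image φ) φ :=
  ⟨hφ, rfl, fun u v => ((hφ.prodMap hφ).mem_finset_image (s := M.edges) (a := (u, v))).symm⟩

theorem isGraphPair_image (M : Motif m) {φ : Fin m → Fin n} (hφ : Function.Injective φ) :
    IsGraphPair (M.image φ) := by
  simp only [IsGraphPair, image, Finset.mem_image, Finset.mem_univ, true_and, Prod.exists,
    Prod.map, forall_exists_index, and_imp]
  rintro _ u v huv rfl
  exact ⟨⟨u, rfl⟩, ⟨v, rfl⟩, hφ.ne (M.irrefl _ huv)⟩

theorem eq_image_of_isIso {M : Motif m} {H : Finset (Fin n) × Finset (Fin n × Fin n)}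
    {φ : Fin m → Fin n} (hH : IsGraphPair H) (hφ : IsIso M H φ) : H = M.image φ := by
  obtain ⟨-, himg, hedge⟩ := hφ
  refine Prod.ext himg.symm (Finset.ext fun e => ⟨fun he => ?_, fun he => ?_⟩)
  · obtain ⟨h1, h2, -⟩ := hH e he
    rw [← himg] at h1 h2
    obtain ⟨u, -, hu⟩ := Finset.mem_image.mp h1
    obtain ⟨v, -, hv⟩ := Finset.mem_image.mp h2
    refine Finset.mem_image.mpr ⟨(u, v), (hedge u v).mpr ?_, ?_⟩
    · rwa [hu, hv]
    · simp [hu, hv]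
  · obtain ⟨⟨u, v⟩, huv, rfl⟩ := Finset.mem_image.mp he
    exact (hedge u v).mp huv

theorem isFuncInstance_iff {M : Motif m} {G : Matrix (Fin n) (Fin n) ℝ}
    {H : Finset (Fin n) × Finset (Fin n × Fin n)} :
    IsFuncInstance M G H ↔ ∃ φ : Fin m → Fin n, Function.Injective φ ∧
      (∀ e ∈ M.edges, (φ e.1, φ e.2) ∈ edgeFinset G) ∧ H = M.image φ := by
  constructor
  · rintro ⟨hH, hsub, φ, hφ⟩
    obtain rfl := eq_image_of_isIso hH hφ
    exact ⟨φ, hφ.1, fun e he => hsub (Finset.mem_image_of_mem _ he), rfl⟩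
  · rintro ⟨φ, hφ, hG, rfl⟩
    refine ⟨M.isGraphPair_image hφ, fun e he => ?_, φ, M.isIso_image hφ⟩
    obtain ⟨e, he', rfl⟩ := Finset.mem_image.mp he
    exact hG e he'

theorem anchoredPair_univ_iff {M : Motif m} {H : Finset (Fin n) × Finset (Fin n × Fin n)}
    {i j : Fin n} :
    AnchoredPair M Finset.univ H i j ↔ (∃ φ, IsIso M H φ) ∧ i ∈ H.1 ∧ j ∈ H.1 ∧ i ≠ j := by
  constructor
  · rintro ⟨φ, hφ, u, -, v, -, huv, rfl, rfl⟩
    rw [← hφ.2.1]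
    exact ⟨⟨φ, hφ⟩, Finset.mem_image_of_mem φ (Finset.mem_univ u),
      Finset.mem_image_of_mem φ (Finset.mem_univ v), hφ.1.ne huv⟩
  · rintro ⟨⟨φ, hφ⟩, hi, hj, hij⟩
    rw [← hφ.2.1] at hi hj
    obtain ⟨u, -, rfl⟩ := Finset.mem_image.mp hi
    obtain ⟨v, -, rfl⟩ := Finset.mem_image.mp hj
    exact ⟨φ, hφ, u, Finset.mem_univ u, v, Finset.mem_univ v, fun h => hij (h ▸ rfl), rfl, rfl⟩

end Motif

def IsTwoPath (G : Matrix (Fin n) (Fin n) ℝ) (a b c : Fin n) : Prop :=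
  (a, b) ∈ edgeFinset G ∧ (b, c) ∈ edgeFinset G ∧ a ≠ c

theorem IsTwoPath.pairwise_ne {G : Matrix (Fin n) (Fin n) ℝ} {a b c : Fin n}
    (h : IsTwoPath G a b c) : a ≠ b ∧ b ≠ c ∧ a ≠ c :=
  ⟨(mem_edgeFinset.mp h.1).1, (mem_edgeFinset.mp h.2.1).1, h.2.2⟩

def twoPathGraph (a b c : Fin n) : Finset (Fin n) × Finset (Fin n × Fin n) :=
  ({a, b, c}, {(a, b), (b, c)})

theorem twoPathGraph_injOn :
    Set.InjOn (fun p : Fin n × Fin n × Fin n => twoPathGraph p.1 p.2.1 p.2.2)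
      {p | p.1 ≠ p.2.2} := by
  rintro ⟨a, b, c⟩ hac ⟨a', b', c'⟩ - h
  have hE := congrArg Prod.snd h
  have hab : (a, b) ∈ (twoPathGraph a' b' c').2 := hE ▸ by simp [twoPathGraph]
  have hbc : (b, c) ∈ (twoPathGraph a' b' c').2 := hE ▸ by simp [twoPathGraph]
  simp only [twoPathGraph, Finset.mem_insert, Finset.mem_singleton, Prod.mk.injEq] at hab hbc
  rcases hab with ⟨rfl, rfl⟩ | ⟨rfl, rfl⟩ <;> rcases hbc with ⟨h₁, h₂⟩ | ⟨h₁, h₂⟩ <;>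
    simp_all

theorem Motif.image_eq_twoPathGraph {M : Motif 3} (hM : M.edges = {(0, 1), (1, 2)})
    (φ : Fin 3 → Fin n) : M.image φ = twoPathGraph (φ 0) (φ 1) (φ 2) := by
  simp [Motif.image, twoPathGraph, hM, Finset.image_insert, Fin.univ_succ]

theorem isFuncInstance_iff_twoPath {M : Motif 3} (hM : M.edges = {(0, 1), (1, 2)})
    {G : Matrix (Fin n) (Fin n) ℝ} {H : Finset (Fin n) × Finset (Fin n × Fin n)} :
    IsFuncInstance M G H ↔ ∃ a b c, IsTwoPath G a b c ∧ H = twoPathGraph a b c := by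
  simp only [Motif.isFuncInstance_iff, Motif.image_eq_twoPathGraph hM, hM]
  constructor
  · rintro ⟨φ, hφ, hG, rfl⟩
    exact ⟨φ 0, φ 1, φ 2, ⟨hG (0, 1) (by simp), hG (1, 2) (by simp), hφ.ne (by decide)⟩, rfl⟩
  · rintro ⟨a, b, c, habc, rfl⟩
    obtain ⟨hab, hbc, hac⟩ := habc.pairwise_ne
    refine ⟨![a, b, c], fun u v huv => ?_, by simp [habc.1, habc.2.1], rfl⟩
    fin_cases u <;> fin_cases v <;> simp_all [eq_comm]

theorem mamFunc_apply_eq_sum_twoPath {M : Motif 3} (hM : M.edges = {(0, 1), (1, 2)})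
    (G : Matrix (Fin n) (Fin n) ℝ) (i j : Fin n) :
    mamFunc M Finset.univ G i j = 1 / 2 * ∑ p : Fin n × Fin n × Fin n,
      if IsTwoPath G p.1 p.2.1 p.2.2 ∧ i ∈ ({p.1, p.2.1, p.2.2} : Finset (Fin n)) ∧
          j ∈ ({p.1, p.2.1, p.2.2} : Finset (Fin n)) ∧ i ≠ j
        then G p.1 p.2.1 + G p.2.1 p.2.2 else 0 := by
  have hcard : M.edges.card = 2 := by rw [hM]; decide
  simp only [mamFunc, hcard, Nat.cast_ofNat]
  congr 1
  refine Fintype.sum_ite_eq_sum_ite_of_injOn _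
    (twoPathGraph_injOn.mono fun p hp => hp.1.2.2) (fun H => ?_) ?_
  · rw [Motif.anchoredPair_univ_iff]
    constructor
    · rintro ⟨hH, -, hi, hj, hij⟩
      obtain ⟨a, b, c, habc, rfl⟩ := (isFuncInstance_iff_twoPath hM).mp hH
      exact ⟨(a, b, c), ⟨habc, hi, hj, hij⟩, rfl⟩
    · rintro ⟨⟨a, b, c⟩, ⟨habc, hi, hj, hij⟩, rfl⟩
      have hH := (isFuncInstance_iff_twoPath hM).mpr ⟨a, b, c, habc, rfl⟩
      exact ⟨hH, hH.2.2, hi, hj, hij⟩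
  · rintro ⟨a, b, c⟩ ⟨habc, -⟩
    have hab : (a, b) ≠ (b, c) := fun h => habc.pairwise_ne.1 (congrArg Prod.fst h)
    exact Finset.sum_pair hab

-- The matrix `C` of the paper, so that `M^func = (1/2) (C + Cᵀ)`.
def twoPathMatrix (G : Matrix (Fin n) (Fin n) ℝ) : Matrix (Fin n) (Fin n) ℝ :=
  had (Jmat G) (Jnmat n * Gᵀ) + had G (Jnmat n * (Jmat G)ᵀ) +
    had (Jnmat n) (Jmat G * G) + had (Jnmat n) (G * Jmat G) +
    had (Jmat G) (Gᵀ * Jnmat n) + had G ((Jmat G)ᵀ * Jnmat n)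

theorem twoPathMatrix_apply (G : Matrix (Fin n) (Fin n) ℝ) (i j : Fin n) :
    twoPathMatrix G i j = ∑ a, ∑ b, ∑ c,
      (Jmat G a b * Jnmat n a c * G b c + G a b * Jnmat n a c * Jmat G b c) *
        ((if i = a ∧ j = b then 1 else 0) + (if i = b ∧ j = c then 1 else 0) +
          (if i = a ∧ j = c then 1 else 0)) := by
  simp only [mul_add, Finset.sum_add_distrib, ite_and, mul_ite, mul_one, mul_zero,
    Finset.sum_ite_eq, Finset.mem_univ, if_true, Finset.sum_ite_irrel, Finset.sum_const_zero]
  simp only [twoPathMatrix, had, Matrix.add_apply, Matrix.mul_apply, Matrix.transpose_apply,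
    Finset.mul_sum, ← Finset.sum_add_distrib]
  exact Finset.sum_congr rfl fun x _ => by ring

-- The shape of the right-hand side matches the summands of the six Hadamard products.
theorem ite_isTwoPath_eq {G : Matrix (Fin n) (Fin n) ℝ} (hpos : ∀ i j, 0 ≤ G i j)
    (hdiag : ∀ i, G i i = 0) (a b c : Fin n) :
    (if IsTwoPath G a b c then G a b + G b c else 0) =
      Jmat G a b * Jnmat n a c * G b c + G a b * Jnmat n a c * Jmat G b c := by
  by_cases hab : (a, b) ∈ edgeFinset G
  · by_cases hbc : (b, c) ∈ edgeFinset G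
    · by_cases hac : a = c
      · simp [IsTwoPath, Jnmat, hac]
      · simp [IsTwoPath, Jmat, Jnmat, hab, hbc, hac, add_comm]
    · simp [IsTwoPath, Jmat, hbc, apply_eq_zero_of_notMem_edgeFinset hpos hdiag hbc]
  · simp [IsTwoPath, Jmat, hab, apply_eq_zero_of_notMem_edgeFinset hpos hdiag hab]

theorem ite_mem_triple_and_ne {α R : Type*} [DecidableEq α] [Semiring R] {a b c : α}
    (hab : a ≠ b) (hbc : b ≠ c) (hac : a ≠ c) (i j : α) :
    (if i ∈ ({a, b, c} : Finset α) ∧ j ∈ ({a, b, c} : Finset α) ∧ i ≠ j then (1 : R) else 0) =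
      (if i = a ∧ j = b then 1 else 0) + (if i = b ∧ j = c then 1 else 0) +
          (if i = a ∧ j = c then 1 else 0) +
        ((if j = a ∧ i = b then 1 else 0) + (if j = b ∧ i = c then 1 else 0) +
          (if j = a ∧ i = c then 1 else 0)) := by
  by_cases hi : i ∈ ({a, b, c} : Finset α)
  · by_cases hj : j ∈ ({a, b, c} : Finset α)
    · simp only [Finset.mem_insert, Finset.mem_singleton] at hi hj
      rcases hi with rfl | rfl | rfl <;> rcases hj with rfl | rfl | rfl <;>
        simp [hab, hbc, hac, hab.symm, hbc.symm, hac.symm]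
    · simp only [Finset.mem_insert, Finset.mem_singleton, not_or] at hj
      simp [hj]
  · simp only [Finset.mem_insert, Finset.mem_singleton, not_or] at hi
    simp [hi]

theorem sum_twoPath_eq_twoPathMatrix {G : Matrix (Fin n) (Fin n) ℝ}
    (hpos : ∀ i j, 0 ≤ G i j) (hdiag : ∀ i, G i i = 0) (i j : Fin n) :
    ∑ p : Fin n × Fin n × Fin n,
      (if IsTwoPath G p.1 p.2.1 p.2.2 ∧ i ∈ ({p.1, p.2.1, p.2.2} : Finset (Fin n)) ∧
          j ∈ ({p.1, p.2.1, p.2.2} : Finset (Fin n)) ∧ i ≠ j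
        then G p.1 p.2.1 + G p.2.1 p.2.2 else 0) =
      twoPathMatrix G i j + twoPathMatrix G j i := by
  simp only [Fintype.sum_prod_type, twoPathMatrix_apply, ← Finset.sum_add_distrib, ← mul_add]
  refine Finset.sum_congr rfl fun a _ => Finset.sum_congr rfl fun b _ =>
    Finset.sum_congr rfl fun c _ => ?_
  rw [← ite_isTwoPath_eq hpos hdiag]
  by_cases h : IsTwoPath G a b c
  · obtain ⟨hab, hbc, hac⟩ := h.pairwise_ne
    rw [← ite_mem_triple_and_ne hab hbc hac, if_pos h, mul_ite, mul_one, mul_zero]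
    exact if_congr (and_iff_right h) rfl rfl
  · rw [if_neg (fun h' => h h'.1), if_neg h, zero_mul]

/-- **Functional MAM formula for the 2-path motif `M₉`.** -/
theorem mam_M9_func
    (G : Matrix (Fin n) (Fin n) ℝ)
    (hpos : ∀ i j, 0 ≤ G i j) (hdiag : ∀ i, G i i = 0)
    (M9 : Motif 3) (hM : M9.edges = {((0 : Fin 3), 1), (1, 2)}) :
    mamFunc M9 Finset.univ G =
      (1 / 2 : ℝ) •
        (had (Jmat G) (Jnmat n * Gᵀ) + had G (Jnmat n * (Jmat G)ᵀ) +
          had (Jnmat n) (Jmat G * G) + had (Jnmat n) (G * Jmat G) +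
          had (Jmat G) (Gᵀ * Jnmat n) + had G ((Jmat G)ᵀ * Jnmat n) +
          (had (Jmat G) (Jnmat n * Gᵀ) + had G (Jnmat n * (Jmat G)ᵀ) +
            had (Jnmat n) (Jmat G * G) + had (Jnmat n) (G * Jmat G) +
            had (Jmat G) (Gᵀ * Jnmat n) + had G ((Jmat G)ᵀ * Jnmat n))ᵀ) := by
  change _ = (1 / 2 : ℝ) • (twoPathMatrix G + (twoPathMatrix G)ᵀ)
  ext i j
  rw [mamFunc_apply_eq_sum_twoPath hM, sum_twoPath_eq_twoPathMatrix hpos hdiag]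
  rfl
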